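/- arXiv:1403.4407 — 2 statements merged into one kernel-verified Lean document; each statement's English description precedes it below -/
import Mathlib

section
/- Let T be a consistent first-order theory extending PA with a unary predicate K such that (T) T proves K(⌜A⌝) → A for every sentence A, and (Nec) whenever T ⊢ A then T ⊢ K(⌜A⌝). Then T is inconsistent. -/
/-!
Veracity for the diagonal sentence gives `K D → D`, and the diagonal property gives `D → ¬K D`;
together `K D → ¬K D`, so `¬K D` is provable. The diagonal property then makes `D` provable,
necessitation makes `K D` provable, and `¬K D` refutes it.
-/

/-- Formulas of an abstract language with an operator `K` ("knowledge predicate"). -/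
inductive Fm : Type
  | atom : ℕ → Fm
  | bot : Fm
  | imp : Fm → Fm → Fm
  | K : Fm → Fm

namespace Fm

def neg (A : Fm) : Fm := imp A bot
def conj (A B : Fm) : Fm := neg (imp A (neg B))
def iff' (A B : Fm) : Fm := conj (imp A B) (imp B A)

end Fm

open Fm

structure IsPropTheory (Prov : Fm → Prop) : Prop where
  ax_k : ∀ A B, Prov (imp A (imp B A))
  ax_s : ∀ A B C, Prov (imp (imp A (imp B C)) (imp (imp A B) (imp A C)))
  ax_contra : ∀ A B, Prov (imp (imp (neg A) (neg B)) (imp B A))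
  mp : ∀ A B, Prov (imp A B) → Prov A → Prov B

namespace IsPropTheory

variable {Prov : Fm → Prop}

theorem imp_self (h : IsPropTheory Prov) (A : Fm) : Prov (imp A A) :=
  h.mp _ _ (h.mp _ _ (h.ax_s A (imp A A) A) (h.ax_k A (imp A A))) (h.ax_k A A)

theorem imp_trans (h : IsPropTheory Prov) {A B C : Fm}
    (hAB : Prov (imp A B)) (hBC : Prov (imp B C)) : Prov (imp A C) :=
  h.mp _ _ (h.mp _ _ (h.ax_s A B C) (h.mp _ _ (h.ax_k (imp B C) A) hBC)) hAB

theorem imp_comm (h : IsPropTheory Prov) {A B C : Fm}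
    (hABC : Prov (imp A (imp B C))) : Prov (imp B (imp A C)) :=
  h.imp_trans (h.ax_k B A) (h.mp _ _ (h.ax_s A B C) hABC)

theorem imp_imp_imp_self (h : IsPropTheory Prov) (A B : Fm) :
    Prov (imp A (imp (imp A B) B)) :=
  h.imp_comm (h.imp_self (imp A B))

theorem bot_imp (h : IsPropTheory Prov) (A : Fm) : Prov (imp bot A) :=
  h.mp _ _ (h.ax_contra A bot) (h.mp _ _ (h.ax_k (neg bot) (neg A)) (h.imp_self bot))

theorem neg_neg_imp (h : IsPropTheory Prov) (A : Fm) : Prov (imp (neg (neg A)) A) :=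
  h.mp _ _ (h.ax_contra A (neg (neg A))) (h.imp_imp_imp_self (neg A) bot)

theorem neg_imp_neg (h : IsPropTheory Prov) {A B : Fm}
    (hAB : Prov (imp A B)) : Prov (imp (neg B) (neg A)) :=
  h.imp_comm (h.imp_trans hAB (h.imp_imp_imp_self B bot))

theorem of_neg_imp_of_neg_neg (h : IsPropTheory Prov) {A B : Fm}
    (hA : Prov (imp (neg A) B)) (hB : Prov (neg B)) : Prov A :=
  h.mp _ _ (h.neg_neg_imp A) (h.mp _ _ (h.neg_imp_neg hA) hB)

theorem conj_left (h : IsPropTheory Prov) {A B : Fm} (hAB : Prov (conj A B)) : Prov A :=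
  have hA : Prov (imp A (imp bot (neg B))) := h.mp _ _ (h.ax_k _ A) (h.bot_imp (neg B))
  h.of_neg_imp_of_neg_neg (h.mp _ _ (h.ax_s A bot (neg B)) hA) hAB

theorem conj_right (h : IsPropTheory Prov) {A B : Fm} (hAB : Prov (conj A B)) : Prov B :=
  h.of_neg_imp_of_neg_neg (h.ax_k (neg B) A) hAB

theorem iff'_mp (h : IsPropTheory Prov) {A B : Fm} (hAB : Prov (iff' A B)) :
    Prov (imp A B) :=
  h.conj_left hAB

theorem iff'_mpr (h : IsPropTheory Prov) {A B : Fm} (hAB : Prov (iff' A B)) :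
    Prov (imp B A) :=
  h.conj_right hAB

theorem neg_of_imp_neg (h : IsPropTheory Prov) {A : Fm} (hA : Prov (imp A (neg A))) :
    Prov (neg A) :=
  h.mp _ _ (h.mp _ _ (h.ax_s A A bot) hA) (h.imp_self A)

end IsPropTheory

/-- The Knower Paradox (Montague): a theory closed under propositional consequence,
with a knowledge operator `K` satisfying the veracity scheme `K A → A` and the
necessitation rule, together with a diagonal sentence `D ↔ ¬K D` (as supplied by
the Fixed Point Lemma in any theory extending PA), is inconsistent. -/
theorem knower_paradox
    (Prov : Fm → Prop)
    (ax1 : ∀ A B, Prov (imp A (imp B A)))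
    (ax2 : ∀ A B C, Prov (imp (imp A (imp B C)) (imp (imp A B) (imp A C))))
    (ax3 : ∀ A B, Prov (imp (imp (neg A) (neg B)) (imp B A)))
    (mp : ∀ A B, Prov (imp A B) → Prov A → Prov B)
    (hT : ∀ A, Prov (imp (K A) A))
    (hNec : ∀ A, Prov A → Prov (K A))
    (D : Fm) (hdiag : Prov (iff' D (neg (K D)))) :
    Prov bot := by
  have hP : IsPropTheory Prov := ⟨ax1, ax2, ax3, mp⟩
  have hnK : Prov (neg (K D)) := hP.neg_of_imp_neg (hP.imp_trans (hT D) (hP.iff'_mp hdiag))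
  have hD : Prov D := mp _ _ (hP.iff'_mpr hdiag) hnK
  exact mp _ _ hnK (hNec D hD)
end

section
/- Let T be a theory extending PA with a unary predicate K satisfying (T) K(⌜A⌝) → A for all sentences A and (Nec) T ⊢ A implies T ⊢ K(⌜A⌝). Let E be any sentence and let D be a sentence with T ⊢ D ↔ (K(⌜¬D⌝) ∨ (E ∧ ¬K(⌜D → E⌝))) (given by the Fixed Point Lemma). Then T is inconsistent. -/
namespace Fm

def disj (A B : Fm) : Fm := imp (neg A) B
end Fm

open Fm

/-!
Veracity for `K ¬D` together with the first disjunct of the diagonal equivalence gives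
`⊢ K ¬D → D` and hence `⊢ ¬K ¬D`, so `D` collapses to its second disjunct `E ∧ ¬K (D → E)`.
Thus `⊢ D → E`; necessitation yields `⊢ K (D → E)`, whence `⊢ ¬D`. Necessitating once more
gives `⊢ K ¬D`, hence `⊢ D`.
-/

structure IsHilbertTheory (S : Fm → Prop) : Prop where
  ax1 : ∀ A B, S (imp A (imp B A))
  ax2 : ∀ A B C, S (imp (imp A (imp B C)) (imp (imp A B) (imp A C)))
  ax3 : ∀ A B, S (imp (imp (neg A) (neg B)) (imp B A))
  mp {A B : Fm} : S (imp A B) → S A → S B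

namespace IsHilbertTheory

variable {S : Fm → Prop} (hS : IsHilbertTheory S)
include hS

theorem imp_intro {A B : Fm} (hB : S B) : S (imp A B) :=
  hS.mp (hS.ax1 B A) hB

theorem imp_self (A : Fm) : S (imp A A) :=
  hS.mp (hS.mp (hS.ax2 A (imp A A) A) (hS.ax1 A (imp A A))) (hS.ax1 A A)

theorem imp_of_imp_imp {A B C : Fm} (h : S (imp A (imp B C))) (hB : S B) :
    S (imp A C) :=
  hS.mp (hS.mp (hS.ax2 A B C) h) (hS.imp_intro hB)

theorem imp_trans {A B C : Fm} (hAB : S (imp A B)) (hBC : S (imp B C)) : S (imp A C) :=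
  hS.mp (hS.mp (hS.ax2 A B C) (hS.imp_intro hBC)) hAB

theorem neg_of_imp_of_imp_neg {A B : Fm} (hB : S (imp A B)) (hnB : S (imp A (neg B))) :
    S (neg A) :=
  hS.mp (hS.mp (hS.ax2 A B bot) hnB) hB

/-- Working under a hypothesis `B` means working in the theory `{X | ⊢ B → X}`. -/
theorem assume (B : Fm) : IsHilbertTheory fun X => S (imp B X) where
  ax1 A C := hS.imp_intro (hS.ax1 A C)
  ax2 A C D := hS.imp_intro (hS.ax2 A C D)
  ax3 A C := hS.imp_intro (hS.ax3 A C)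
  mp hAC hA := hS.mp (hS.mp (hS.ax2 _ _ _) hAC) hA

theorem deduction {A B : Fm}
    (h : ∀ S' : Fm → Prop, IsHilbertTheory S' → S ≤ S' → S' B → S' A) : S (imp B A) :=
  h _ (hS.assume B) (fun _ => hS.imp_intro) (hS.imp_self B)

theorem bot_imp (A : Fm) : S (imp bot A) :=
  hS.mp (hS.ax3 A bot) (hS.imp_intro (hS.imp_self bot))

theorem imp_disj_left (A B : Fm) : S (imp A (disj A B)) :=
  hS.deduction fun _ h₁ _ hA => h₁.deduction fun _ h₂ le₂ hnA =>
    h₂.mp (h₂.bot_imp B) (h₂.mp hnA (le₂ _ hA))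

theorem not_not_imp (A : Fm) : S (imp (neg (neg A)) A) :=
  hS.deduction fun _ h₁ _ hnnA =>
    h₁.mp (h₁.mp (h₁.ax3 A (imp A A)) (h₁.imp_trans hnnA (h₁.bot_imp _))) (h₁.imp_self A)

theorem conj_imp_left (A B : Fm) : S (imp (conj A B) A) :=
  hS.deduction fun _ h₁ _ hAB =>
    h₁.mp (h₁.not_not_imp A) <| h₁.deduction fun _ h₂ le₂ hnA =>
    h₂.mp (le₂ _ hAB) <| h₂.deduction fun _ h₃ le₃ hA =>
      h₃.mp (h₃.bot_imp _) (h₃.mp (le₃ _ hnA) hA)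

theorem conj_imp_right (A B : Fm) : S (imp (conj A B) B) :=
  hS.deduction fun _ h₁ _ hAB =>
    h₁.mp (h₁.not_not_imp B) <| h₁.deduction fun _ h₂ le₂ hnB =>
    h₂.mp (le₂ _ hAB) (h₂.imp_intro hnB)

theorem iff'_mp {A B : Fm} (h : S (iff' A B)) : S (imp A B) :=
  hS.mp (hS.conj_imp_left _ _) h

theorem iff'_mpr {A B : Fm} (h : S (iff' A B)) : S (imp B A) :=
  hS.mp (hS.conj_imp_right _ _) h

end IsHilbertTheory

/-- The Examiner Paradox (self-referential one-day Surprise Test Paradox): a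
theory closed under propositional consequence with a knowledge operator `K`
satisfying veracity `K A → A` and the necessitation rule, together with a
sentence `E` and a diagonal sentence
`D ↔ (K ¬D ∨ (E ∧ ¬K (D → E)))` (as supplied by the Fixed Point Lemma in any
theory extending PA), is inconsistent. -/
theorem examiner_paradox
    (Prov : Fm → Prop)
    (ax1 : ∀ A B, Prov (imp A (imp B A)))
    (ax2 : ∀ A B C, Prov (imp (imp A (imp B C)) (imp (imp A B) (imp A C))))
    (ax3 : ∀ A B, Prov (imp (imp (neg A) (neg B)) (imp B A)))
    (mp : ∀ A B, Prov (imp A B) → Prov A → Prov B)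
    (hT : ∀ A, Prov (imp (K A) A))
    (hNec : ∀ A, Prov A → Prov (K A))
    (E D : Fm)
    (hdiag : Prov (iff' D (disj (K (neg D)) (conj E (neg (K (imp D E))))))) :
    Prov bot := by
  have hS : IsHilbertTheory Prov := ⟨ax1, ax2, ax3, mp _ _⟩
  have hKD : Prov (imp (K (neg D)) D) := hS.imp_trans (hS.imp_disj_left _ _) (hS.iff'_mpr hdiag)
  have hnKD : Prov (neg (K (neg D))) := hS.neg_of_imp_of_imp_neg hKD (hT (neg D))
  have hDQ : Prov (imp D (conj E (neg (K (imp D E))))) :=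
    hS.imp_of_imp_imp (hS.iff'_mp hdiag) hnKD
  have hDE : Prov (imp D E) := hS.imp_trans hDQ (hS.conj_imp_left _ _)
  have hnD : Prov (neg D) :=
    hS.imp_of_imp_imp (hS.imp_trans hDQ (hS.conj_imp_right _ _)) (hNec _ hDE)
  exact hS.mp hnD (hS.mp hKD (hNec _ hnD))
end
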